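/- In the graph D (the bipartite join of B' = {a,b,c} and B'' = {u,v,w} with two subdivision vertices per edge, 24 vertices total), the full subgraph obtained by deleting the three vertices of B' (respectively B'') is a disjoint union of three graphs each of type Ê₆ (the affine E₆ Dynkin diagram). -/

import Mathlib

/-- Vertex type of the graph D: the six branch vertices B' ⊔ B'' (each a copy of
`Fin 3`), together with two subdivision vertices `(a, u, false)` (nearer to
a ∈ B') and `(a, u, true)` (nearer to u ∈ B'') on each edge {a, u} of the join
B' ⋆ B''. -/
abbrev V := (Fin 3 ⊕ Fin 3) ⊕ (Fin 3 × Fin 3 × Bool)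

/-- One-directional adjacency of D. -/
def dRel : V → V → Prop := fun v w =>
  match v, w with
  | Sum.inl (Sum.inl a), Sum.inr (a', _, b) => a = a' ∧ b = false
  | Sum.inl (Sum.inr u), Sum.inr (_, u', b) => u = u' ∧ b = true
  | Sum.inr (a, u, b), Sum.inr (a', u', b') => a = a' ∧ u = u' ∧ b ≠ b'
  | _, _ => False

/-- The graph D: the join of B' and B'' with each edge subdivided twice. -/
def D : SimpleGraph V := SimpleGraph.fromRel dRel

/-!
STATEMENT 12: Deleting the three vertices of B' (respectively B'') from D leaves
a disjoint union of three affine Ê₆ Dynkin diagrams.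
-/

/-- Vertex type of the affine Ê₆ diagram: a central vertex together with three
arms of two vertices each. -/
abbrev E6V := Unit ⊕ (Fin 3 × Fin 2)

/-- One-directional adjacency of the affine Ê₆ tree: the center is joined to the
first vertex of each arm, and each arm is a path of length 2. -/
def e6Rel : E6V → E6V → Prop := fun v w =>
  match v, w with
  | Sum.inl _, Sum.inr (_, j) => j = 0
  | Sum.inr (i, j), Sum.inr (i', j') => i = i' ∧ j ≠ j'
  | _, _ => False

/-- The affine Ê₆ Dynkin diagram as a graph. -/
def E6aff : SimpleGraph E6V := SimpleGraph.fromRel e6Rel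

/-- Disjoint union of three copies of Ê₆. -/
def threeE6 : SimpleGraph (Fin 3 × E6V) where
  Adj x y := x.1 = y.1 ∧ E6aff.Adj x.2 y.2
  symm := by
    constructor
    rintro ⟨i, v⟩ ⟨j, w⟩ ⟨h1, h2⟩
    exact ⟨h1.symm, h2.symm⟩
  loopless := by
    constructor
    rintro ⟨i, v⟩ ⟨-, h⟩
    exact E6aff.irrefl h

/-- The vertices of D remaining after deleting B'. -/
def delB' : Set V := {v | ∀ a : Fin 3, v ≠ Sum.inl (Sum.inl a)}

/-- The vertices of D remaining after deleting B''. -/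
def delB'' : Set V := {v | ∀ u : Fin 3, v ≠ Sum.inl (Sum.inr u)}

lemma SimpleGraph.Embedding.nonempty_induce_iso_of_range_eq {W X : Type*} {G : SimpleGraph W}
    {G' : SimpleGraph X} (f : G ↪g G') {s : Set X} (hs : Set.range f = s) :
    Nonempty (G'.induce s ≃g G) := by
  subst hs
  exact ⟨f.isoInduceRange.symm⟩

/-- Component `u` of `threeE6` is placed with its center at `u ∈ B''` and its arm `a` running
`u — (a, u, true) — (a, u, false)` towards `a ∈ B'`. -/
def e6Copy : Fin 3 × E6V → V
  | (u, Sum.inl ()) => Sum.inl (Sum.inr u)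
  | (u, Sum.inr (a, j)) => Sum.inr (a, u, j = 0)

lemma e6Copy_injective : Function.Injective e6Copy := by
  rintro ⟨u, ⟨⟩ | ⟨a, j⟩⟩ ⟨u', ⟨⟩ | ⟨a', j'⟩⟩ h <;> simp only [e6Copy, Sum.inl.injEq,
    Sum.inr.injEq, Prod.mk.injEq, reduceCtorEq] at h
  · rw [h]
  · obtain ⟨rfl, rfl, hj⟩ := h
    simp only [decide_eq_decide] at hj
    congr
    omega

lemma D_adj_e6Copy_iff (x y : Fin 3 × E6V) : D.Adj (e6Copy x) (e6Copy y) ↔ threeE6.Adj x y := by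
  rcases x with ⟨u, ⟨⟩ | ⟨a, j⟩⟩ <;> rcases y with ⟨u', ⟨⟩ | ⟨a', j'⟩⟩ <;>
    grind [D, dRel, threeE6, E6aff, e6Rel, e6Copy, SimpleGraph.fromRel_adj]

lemma range_e6Copy : Set.range e6Copy = delB' := by
  ext v
  constructor
  · rintro ⟨⟨u, ⟨⟩ | ⟨a, j⟩⟩, rfl⟩ <;> simp [delB', e6Copy]
  · rintro hv
    rcases v with (a | u) | ⟨a, u, b⟩
    · exact absurd rfl (hv a)
    · exact ⟨(u, Sum.inl ()), rfl⟩
    · exact ⟨(u, Sum.inr (a, if b then 0 else 1)), by cases b <;> rfl⟩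

def e6CopyEmbedding : threeE6 ↪g D where
  toFun := e6Copy
  inj' := e6Copy_injective
  map_rel_iff' {x y} := D_adj_e6Copy_iff x y

/-- The symmetry of `D` exchanging `B'` and `B''`. -/
def sideSwap : V → V
  | Sum.inl v => Sum.inl v.swap
  | Sum.inr (a, u, b) => Sum.inr (u, a, !b)

lemma sideSwap_involutive : Function.Involutive sideSwap := by
  rintro ((a | u) | ⟨a, u, b⟩) <;> simp [sideSwap]

lemma D_adj_sideSwap_iff (v w : V) : D.Adj (sideSwap v) (sideSwap w) ↔ D.Adj v w := by
  rcases v with (a | u) | ⟨a, u, b⟩ <;> rcases w with (a' | u') | ⟨a', u', b'⟩ <;>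
    grind [D, dRel, sideSwap, SimpleGraph.fromRel_adj]

def sideSwapIso : D ≃g D where
  toEquiv := sideSwap_involutive.toPerm
  map_rel_iff' {v w} := D_adj_sideSwap_iff v w

lemma sideSwap_mem_delB''_iff (v : V) : sideSwap v ∈ delB'' ↔ v ∈ delB' := by
  rcases v with (a | u) | ⟨a, u, b⟩ <;> simp [sideSwap, delB', delB'']

theorem stmt12 :
    Nonempty ((D.induce delB') ≃g threeE6) ∧
    Nonempty ((D.induce delB'') ≃g threeE6) := by
  obtain ⟨φ⟩ := e6CopyEmbedding.nonempty_induce_iso_of_range_eq range_e6Copy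
  have ψ : D.induce delB' ≃g D.induce delB'' :=
    sideSwapIso.induce (sideSwapIso.toEquiv.bijOn sideSwap_mem_delB''_iff)
  exact ⟨⟨φ⟩, ⟨ψ.symm.trans φ⟩⟩
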